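/- arXiv:1607.02258 — 6 statements merged into one kernel-verified Lean document; each statement's English description precedes it below -/
import Mathlib

section
/- Let k ≥ 2 and let n be sufficiently large. If q ≤ binom(⌈n/2⌉, k) · ln 2 / (2((1+ln 2)n + ln 2)), then the number of ⌈n/2⌉-element subsets of [n], each weighted by 2^{-binom(⌈n/2⌉,k)/(2q-1)}, is less than 1/2; i.e., binom(n, ⌈n/2⌉) · 2^{-binom(⌈n/2⌉,k)/(2q-1)} < 1/2. -/
open Real

/-!
Bound `C(n, ⌈n/2⌉) ≤ 2ⁿ = e^{n ln 2}`. Since `2q - 1 < 2q`, the hypothesis on `q` gives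
`C(⌈n/2⌉, k) · ln 2 / (2q - 1) ≥ (1 + ln 2) n + ln 2`, so the weight is at most
`e^{-(1 + ln 2) n - ln 2}` and the product is at most `e^{-n} / 2 < 1/2`.
-/

lemma two_rpow_neg_div_le_exp_neg {B c D : ℝ} (hc : 0 < c) (h : c * D ≤ B * log 2) :
    (2 : ℝ) ^ (-B / c) ≤ exp (-D) := by
  rw [rpow_def_of_pos two_pos, exp_le_exp, mul_div_assoc', div_le_iff₀ hc]
  linarith

lemma two_pow_mul_exp_neg_lt_half {n : ℕ} (hn : 0 < n) :
    (2 : ℝ) ^ n * exp (-((1 + log 2) * n + log 2)) < 1 / 2 := by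
  have hexp : (2 : ℝ) ^ n * exp (-((1 + log 2) * n + log 2)) = exp (-n) / 2 := by
    rw [← rpow_natCast, rpow_def_of_pos two_pos, ← exp_add, div_eq_mul_inv, ← exp_log two_pos,
      ← exp_neg, ← exp_add, exp_log two_pos]
    ring_nf
  rw [hexp]
  have : exp (-(n : ℝ)) < 1 := exp_lt_one_iff.mpr (by simpa using hn)
  linarith

theorem waiterClient_noncol_potential_general (k : ℕ) :
    ∃ n₀ : ℕ, ∀ n : ℕ, n₀ ≤ n → ∀ q : ℕ, 0 < q →
      (q : ℝ) ≤ (((n + 1) / 2).choose k : ℝ) * Real.log 2 /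
          (2 * ((1 + Real.log 2) * n + Real.log 2)) →
      (n.choose ((n + 1) / 2) : ℝ) *
        (2 : ℝ) ^ (-((((n + 1) / 2).choose k : ℝ)) / (2 * q - 1)) < 1 / 2 := by
  refine ⟨1, fun n hn q hq hqle => ?_⟩
  set B : ℝ := (((n + 1) / 2).choose k : ℝ)
  set D : ℝ := (1 + log 2) * n + log 2
  have hD : 0 < D := by positivity
  have hq1 : (1 : ℝ) ≤ q := by exact_mod_cast hq
  have hqD : q * (2 * D) ≤ B * log 2 := (le_div_iff₀ (by positivity)).mp hqle
  have hweight : (2 : ℝ) ^ (-B / (2 * q - 1)) ≤ exp (-D) :=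
    two_rpow_neg_div_le_exp_neg (by linarith) (by nlinarith)
  have hchoose : (n.choose ((n + 1) / 2) : ℝ) ≤ 2 ^ n := by
    exact_mod_cast Nat.choose_le_two_pow n _
  calc (n.choose ((n + 1) / 2) : ℝ) * (2 : ℝ) ^ (-B / (2 * q - 1))
      ≤ 2 ^ n * exp (-D) := mul_le_mul hchoose hweight (by positivity) (by positivity)
    _ < 1 / 2 := two_pow_mul_exp_neg_lt_half hn

/-- Potential estimate for Waiter's win in the Waiter–Client non-2-colourability game:
for `k ≥ 2` and `n` sufficiently large, if `q ≤ C(⌈n/2⌉,k)·ln 2 / (2((1+ln 2)n + ln 2))`,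
then `C(n,⌈n/2⌉) · 2^{-C(⌈n/2⌉,k)/(2q-1)} < 1/2`. -/
theorem waiterClient_noncol_potential (k : ℕ) (hk : 2 ≤ k) :
    ∃ n₀ : ℕ, ∀ n : ℕ, n₀ ≤ n → ∀ q : ℕ, 0 < q →
      (q : ℝ) ≤ (((n + 1) / 2).choose k : ℝ) * Real.log 2 /
          (2 * ((1 + Real.log 2) * n + Real.log 2)) →
      (n.choose ((n + 1) / 2) : ℝ) *
        (2 : ℝ) ^ (-((((n + 1) / 2).choose k : ℝ)) / (2 * q - 1)) < 1 / 2 :=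
  waiterClient_noncol_potential_general k
end

section
/- Let k ≥ 2 and let n be sufficiently large. If q ≤ binom(⌈n/2⌉, k) · ln 2 / ((1+ln 2)n), then binom(n, ⌈n/2⌉) · (q/(q+1))^{binom(⌈n/2⌉,k)} < 1. -/
open Real

/-- Potential estimate for Client's win in the Client–Waiter non-2-colourability game:
for `k ≥ 2` and `n` sufficiently large, if `q ≤ C(⌈n/2⌉,k)·ln 2 / ((1+ln 2)n)`,
then `C(n,⌈n/2⌉) · (q/(q+1))^{C(⌈n/2⌉,k)} < 1`. -/
theorem clientWaiter_noncol_potential (k : ℕ) (hk : 2 ≤ k) :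
    ∃ n₀ : ℕ, ∀ n : ℕ, n₀ ≤ n → ∀ q : ℕ, 0 < q →
      (q : ℝ) ≤ (((n + 1) / 2).choose k : ℝ) * Real.log 2 /
          ((1 + Real.log 2) * n) →
      (n.choose ((n + 1) / 2) : ℝ) *
        ((q : ℝ) / (q + 1)) ^ (((n + 1) / 2).choose k) < 1 := by
  refine ⟨1, fun n hn q hq hqle => ?_⟩
  set m := (n + 1) / 2 with hm
  set M := m.choose k with hMdef
  have hq1 : (1:ℝ) ≤ (q:ℝ) := by exact_mod_cast hq
  have hqpos : (0:ℝ) < q := by linarith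
  have hlog2 : (0:ℝ) < Real.log 2 := Real.log_pos (by norm_num)
  have hn1 : 1 ≤ n := hn
  have hnpos : (0:ℝ) < n := by exact_mod_cast hn1
  have hden : (0:ℝ) < (1 + Real.log 2) * n := by positivity
  have hMq : (q:ℝ) * ((1 + Real.log 2) * n) ≤ (M:ℝ) * Real.log 2 :=
    (le_div_iff₀ hden).mp hqle
  -- Bernoulli: (1+1/q)^q ≥ 2
  have h2le : (2:ℝ) ≤ (1 + 1/(q:ℝ)) ^ q := by
    have h := one_add_mul_le_pow (a := 1/(q:ℝ)) (le_trans (by norm_num) (by positivity : (0:ℝ) ≤ 1/(q:ℝ))) q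
    have hq0 : (q:ℝ) ≠ 0 := ne_of_gt hqpos
    have : (q:ℝ) * (1/(q:ℝ)) = 1 := by field_simp
    nlinarith [h]
  have hlogx : Real.log 2 ≤ (q:ℝ) * Real.log (1 + 1/(q:ℝ)) := by
    calc Real.log 2 ≤ Real.log ((1 + 1/(q:ℝ)) ^ q) :=
          Real.log_le_log (by norm_num) h2le
      _ = (q:ℝ) * Real.log (1 + 1/(q:ℝ)) := by rw [Real.log_pow]
  -- key exponent bound
  have hML : (1 + Real.log 2) * n ≤ (M:ℝ) * Real.log (1 + 1/(q:ℝ)) := by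
    have hM0 : (0:ℝ) ≤ (M:ℝ) := Nat.cast_nonneg M
    have h1 : (M:ℝ) * Real.log 2 ≤ (M:ℝ) * ((q:ℝ) * Real.log (1 + 1/(q:ℝ))) :=
      mul_le_mul_of_nonneg_left hlogx hM0
    have h2 : (q:ℝ) * ((1 + Real.log 2) * n) ≤ (q:ℝ) * ((M:ℝ) * Real.log (1 + 1/(q:ℝ))) := by
      nlinarith
    exact le_of_mul_le_mul_left h2 hqpos
  -- x = q/(q+1)
  set x : ℝ := (q:ℝ) / (q + 1) with hx
  have hxpos : 0 < x := by positivity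
  have hxinv : x⁻¹ = 1 + 1/(q:ℝ) := by
    rw [hx]; field_simp
  have hlogxval : Real.log x = - Real.log (1 + 1/(q:ℝ)) := by
    rw [← hxinv, Real.log_inv, neg_neg]
  have hxM : x ^ M ≤ Real.exp (-((1 + Real.log 2) * n)) := by
    have : x ^ M = Real.exp ((M:ℝ) * Real.log x) := by
      rw [← Real.log_pow, Real.exp_log (pow_pos hxpos M)]
    rw [this]
    apply Real.exp_le_exp.mpr
    rw [hlogxval]
    nlinarith [hML]
  -- choose bound
  have hmn : m ≤ n := by omega
  have hchoose : (n.choose m : ℝ) ≤ 2 ^ n := by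
    have h1 : n.choose m ≤ ∑ i ∈ Finset.range (n+1), n.choose i :=
      Finset.single_le_sum (fun i _ => Nat.zero_le _) (Finset.mem_range.mpr (by omega))
    have h2 : ∑ i ∈ Finset.range (n+1), n.choose i = 2 ^ n := Nat.sum_range_choose n
    have : n.choose m ≤ 2 ^ n := by omega
    exact_mod_cast this
  have hexp : Real.exp (-((1 + Real.log 2) * n)) = Real.exp (-(n:ℝ)) / 2 ^ n := by
    have h2n : Real.exp (Real.log 2 * n) = 2 ^ n := by
      rw [mul_comm, Real.exp_nat_mul, Real.exp_log (by norm_num : (0:ℝ) < 2)]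
    rw [eq_div_iff (by positivity : (2:ℝ)^n ≠ 0), ← h2n, ← Real.exp_add]
    ring_nf
  calc (n.choose m : ℝ) * x ^ M ≤ 2 ^ n * (Real.exp (-(n:ℝ)) / 2 ^ n) := by
        apply mul_le_mul hchoose (hxM.trans_eq hexp) (by positivity) (by positivity)
    _ = Real.exp (-(n:ℝ)) := by field_simp
    _ < 1 := Real.exp_lt_one_iff.mpr (by linarith)
end

section
/- Let k ≥ 2 be fixed, let n be sufficiently large, and let q ≥ 2^{k/2} e^{k/2+1} k · binom(n,k)/n. Then Σ_{t=k}^{n} binom(n,t) · binom(binom(t,k), 2t/k) · q^{-2t/k} < 1, where 2t/k is interpreted as ⌈2t/k⌉ (or the sum is over sets of edges of size exactly 2t/k when k divides 2t). -/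
/-!
Every term is at most `2⁻ᵗ / 4`, so the sum is below `1/2`. Put `m = ⌈2t/k⌉` and `s = √(2e)`, so
that the hypothesis reads `q ≥ sᵏ e k C(n,k) / n`. From `C(N,m) ≤ (eN/m)ᵐ` and
`C(t,k) ≤ (t/n)ᵏ C(n,k)` one gets `C(C(t,k),m) q⁻ᵐ ≤ ((t/n)ᵏ⁻¹ / (2sᵏ))ᵐ`, using `2t ≤ km`.
As `t ≤ (k-1)m`, `2 ≤ m` and `s^(km) ≥ s^(2t) = (2e)ᵗ`, this is at most `(t/n)ᵗ / (4 (2e)ᵗ)`,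
and multiplying by `C(n,t) ≤ (en/t)ᵗ` leaves `2⁻ᵗ / 4`.
-/

open Real

namespace Nat

theorem choose_le_exp_one_mul_div_pow (N m : ℕ) : (N.choose m : ℝ) ≤ (exp 1 * N / m) ^ m := by
  rcases m.eq_zero_or_pos with rfl | hm
  · simp
  have hm' : (0 : ℝ) < m := by exact_mod_cast hm
  have hfac : ((m : ℝ) / exp 1) ^ m ≤ m ! := by
    have h := pow_div_factorial_le_exp (m : ℝ) hm'.le m
    rw [div_le_iff₀ (by positivity), ← exp_one_pow] at h
    rwa [div_pow, div_le_iff₀ (by positivity), mul_comm]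
  calc (N.choose m : ℝ) ≤ N ^ m / m ! := choose_le_pow_div m N
    _ ≤ N ^ m / ((m : ℝ) / exp 1) ^ m := by gcongr
    _ = (exp 1 * N / m) ^ m := by rw [← div_pow]; field_simp

theorem descFactorial_mul_pow_le_descFactorial_mul_pow {t n : ℕ} (h : t ≤ n) (k : ℕ) :
    t.descFactorial k * n ^ k ≤ n.descFactorial k * t ^ k := by
  induction k with
  | zero => simp
  | succ k ih =>
    have hstep : (t - k) * n ≤ (n - k) * t := by
      rw [Nat.sub_mul, Nat.sub_mul, Nat.mul_comm n t]
      exact Nat.sub_le_sub_left (Nat.mul_le_mul_left k h) _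
    calc t.descFactorial (k + 1) * n ^ (k + 1)
        = ((t - k) * n) * (t.descFactorial k * n ^ k) := by rw [descFactorial_succ, pow_succ]; ring
      _ ≤ ((n - k) * t) * (n.descFactorial k * t ^ k) := Nat.mul_le_mul hstep ih
      _ = n.descFactorial (k + 1) * t ^ (k + 1) := by rw [descFactorial_succ, pow_succ]; ring

theorem choose_mul_pow_le_choose_mul_pow {t n : ℕ} (h : t ≤ n) (k : ℕ) :
    t.choose k * n ^ k ≤ n.choose k * t ^ k := by
  have := descFactorial_mul_pow_le_descFactorial_mul_pow h k
  rw [descFactorial_eq_factorial_mul_choose, descFactorial_eq_factorial_mul_choose, mul_assoc,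
    mul_assoc] at this
  exact Nat.le_of_mul_le_mul_left this k.factorial_pos

theorem cast_choose_le_div_pow_mul_cast_choose {t n : ℕ} (h : t ≤ n) (hn : 0 < n) (k : ℕ) :
    (t.choose k : ℝ) ≤ ((t : ℝ) / n) ^ k * n.choose k := by
  rw [div_pow, div_mul_eq_mul_div, le_div_iff₀ (by positivity), mul_comm _ (n.choose k : ℝ)]
  exact_mod_cast choose_mul_pow_le_choose_mul_pow h k

end Nat

theorem two_rpow_half_mul_exp_half_add_one (k : ℕ) :
    (2 : ℝ) ^ ((k : ℝ) / 2) * exp ((k : ℝ) / 2 + 1) = √(2 * exp 1) ^ k * exp 1 := by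
  rw [exp_add, ← mul_assoc, ← exp_one_rpow, ← mul_rpow (by norm_num) (exp_pos 1).le,
    sqrt_eq_rpow, ← rpow_natCast, ← rpow_mul (by positivity)]
  ring_nf

theorem exp_one_mul_choose_div_le {k t n m : ℕ} {q : ℝ} (hk : k ≠ 0) (hn : 0 < n) (htn : t ≤ n)
    (hm : 0 < m) (hkm : 2 * t ≤ k * m) (hq0 : 0 < q)
    (hq : √(2 * exp 1) ^ k * exp 1 * k * n.choose k / n ≤ q) :
    exp 1 * t.choose k / (m * q) ≤ ((t : ℝ) / n) ^ (k - 1) / (2 * √(2 * exp 1) ^ k) := by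
  set S := √(2 * exp 1) ^ k
  have hkm' : 2 * (t : ℝ) ≤ k * m := by exact_mod_cast hkm
  rw [div_le_div_iff₀ (by positivity) (by positivity)]
  calc exp 1 * t.choose k * (2 * S)
      ≤ exp 1 * (((t : ℝ) / n) ^ k * n.choose k) * (2 * S) := by
        gcongr; exact Nat.cast_choose_le_div_pow_mul_cast_choose htn hn k
    _ = ((t : ℝ) / n) ^ (k - 1) * (2 * t) * (S * exp 1 * n.choose k / n) := by
        rw [← pow_sub_one_mul hk]; field_simp
    _ ≤ ((t : ℝ) / n) ^ (k - 1) * (k * m) * (S * exp 1 * n.choose k / n) := by gcongr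
    _ = ((t : ℝ) / n) ^ (k - 1) * m * (S * exp 1 * k * n.choose k / n) := by ring
    _ ≤ ((t : ℝ) / n) ^ (k - 1) * (m * q) := by rw [mul_assoc]; gcongr

theorem exp_one_mul_div_pow_mul_le {k t n m : ℕ} (ht : 0 < t) (htn : t ≤ n) (hm : 2 ≤ m)
    (htm : t ≤ (k - 1) * m) (hkm : 2 * t ≤ k * m) :
    (exp 1 * n / t) ^ t * (((t : ℝ) / n) ^ (k - 1) / (2 * √(2 * exp 1) ^ k)) ^ m
      ≤ 1 / 4 * (1 / 2) ^ t := by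
  have hn : (0 : ℝ) < n := by exact_mod_cast ht.trans_le htn
  have hs : 1 ≤ √(2 * exp 1) := one_le_sqrt.2 (by linarith [add_one_le_exp 1])
  have hdecay : (((t : ℝ) / n) ^ (k - 1) / (2 * √(2 * exp 1) ^ k)) ^ m
      ≤ ((t : ℝ) / n) ^ t / (2 ^ 2 * √(2 * exp 1) ^ (2 * t)) := by
    have hr : (t : ℝ) / n ≤ 1 := div_le_one_of_le₀ (by exact_mod_cast htn) hn.le
    rw [div_pow, ← pow_mul, mul_pow, ← pow_mul]
    refine div_le_div₀ (by positivity) (pow_le_pow_of_le_one (by positivity) hr htm)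
      (by positivity) ?_
    exact mul_le_mul (pow_le_pow_right₀ (by norm_num) hm) (pow_le_pow_right₀ hs hkm)
      (by positivity) (by positivity)
  calc _ ≤ (exp 1 * n / t) ^ t * (((t : ℝ) / n) ^ t / (2 ^ 2 * √(2 * exp 1) ^ (2 * t))) := by
        gcongr
    _ = (exp 1 * n / t * (t / n)) ^ t / (2 ^ 2 * (2 * exp 1) ^ t) := by
        rw [pow_mul, sq_sqrt (by positivity), ← mul_div_assoc, ← mul_pow]
    _ = 1 / 4 * (1 / 2) ^ t := by
        rw [show exp 1 * n / t * (t / n) = exp 1 by field_simp, mul_pow, one_div_pow]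
        field_simp
        ring

theorem potential_term_le {k t n : ℕ} {q : ℝ} (hk : 2 ≤ k) (ht : k ≤ t) (htn : t ≤ n)
    (hq0 : 0 < q) (hq : √(2 * exp 1) ^ k * exp 1 * k * n.choose k / n ≤ q) :
    (n.choose t : ℝ) * (t.choose k).choose (2 * t ⌈/⌉ k) / q ^ (2 * t ⌈/⌉ k)
      ≤ 1 / 4 * (1 / 2) ^ t := by
  set m := 2 * t ⌈/⌉ k
  have hm2 : 2 ≤ m := by
    by_contra! h
    have := (ceilDiv_le_iff_le_mul (by omega : 0 < k)).1 (Nat.le_of_lt_succ h)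
    omega
  have hmt : m ≤ t := (ceilDiv_le_iff_le_mul (by omega)).2 (Nat.mul_le_mul_right t hk)
  have hkm : 2 * t ≤ k * m := le_smul_ceilDiv (a := k) (by omega)
  have htm : t ≤ (k - 1) * m := by rw [Nat.sub_one_mul]; omega
  calc _ ≤ (exp 1 * n / t) ^ t * ((exp 1 * t.choose k / m) ^ m / q ^ m) := by
        rw [mul_div_assoc]
        gcongr
        exacts [Nat.choose_le_exp_one_mul_div_pow n t, Nat.choose_le_exp_one_mul_div_pow _ m]
    _ = (exp 1 * n / t) ^ t * (exp 1 * t.choose k / (m * q)) ^ m := by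
        rw [← div_pow, div_div]
    _ ≤ (exp 1 * n / t) ^ t * (((t : ℝ) / n) ^ (k - 1) / (2 * √(2 * exp 1) ^ k)) ^ m := by
        gcongr _ * ?_ ^ m
        exact exp_one_mul_choose_div_le (by omega) (by omega) htn (by omega) hkm hq0 hq
    _ ≤ 1 / 4 * (1 / 2) ^ t := exp_one_mul_div_pow_mul_le (by omega) htn hm2 htm hkm

/-- Potential estimate for Client's strategy in the Waiter–Client non-2-colourability game:
for fixed `k ≥ 2`, `n` sufficiently large and `q ≥ 2^{k/2} e^{k/2+1} k C(n,k)/n`,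
`∑_{t=k}^{n} C(n,t) · C(C(t,k), ⌈2t/k⌉) · q^{-⌈2t/k⌉} < 1`. -/
theorem waiterClient_noncol_client_potential (k : ℕ) (hk : 2 ≤ k) :
    ∃ n₀ : ℕ, ∀ n : ℕ, n₀ ≤ n → ∀ q : ℕ, 0 < q →
      (2 : ℝ) ^ ((k : ℝ) / 2) * Real.exp ((k : ℝ) / 2 + 1) * k * (n.choose k : ℝ) / n
        ≤ (q : ℝ) →
      ∑ t ∈ Finset.Icc k n,
        (n.choose t : ℝ) * (((t.choose k).choose ((2 * t + k - 1) / k)) : ℝ) *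
          (q : ℝ) ^ (-(((2 * t + k - 1) / k : ℕ) : ℝ)) < 1 := by
  refine ⟨0, fun n _ q hq hQ => ?_⟩
  rw [two_rpow_half_mul_exp_half_add_one] at hQ
  calc _ ≤ ∑ t ∈ Finset.Icc k n, 1 / 4 * (1 / 2 : ℝ) ^ t := by
        refine Finset.sum_le_sum fun t ht => ?_
        obtain ⟨hkt, htn⟩ := Finset.mem_Icc.1 ht
        rw [rpow_neg (by positivity), rpow_natCast, ← div_eq_mul_inv]
        -- `(2 * t + k - 1) / k` is `2 * t ⌈/⌉ k` by definition
        exact potential_term_le hk hkt htn (by exact_mod_cast hq) hQ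
    _ ≤ ∑ t ∈ Finset.range (n + 1), 1 / 4 * (1 / 2 : ℝ) ^ t :=
        Finset.sum_le_sum_of_subset_of_nonneg (fun t ht => by
          simp only [Finset.mem_Icc, Finset.mem_range] at ht ⊢; omega)
          (fun _ _ _ => by positivity)
    _ = 1 / 4 * ∑ t ∈ Finset.range (n + 1), (1 / 2 : ℝ) ^ t := (Finset.mul_sum ..).symm
    _ ≤ 1 / 4 * 2 := by gcongr; exact sum_geometric_two_le _
    _ < 1 := by norm_num
end

section
/- Let k ≥ 2 be an integer. Any k-CNF boolean formula in which no variable appears (positively or negatively) in more than 2^{k-2}/k clauses is satisfiable. -/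
/-!
A clause `c` has `k` variables, each occurring in at most `2^(k-2)/k` clauses, so `c` shares a
variable with at most `d = 2^(k-2) - 1` other clauses, while a uniformly random assignment
violates `c` with probability `p = 2^(-k)`. Hence `e p (d + 1) = e / 4 ≤ 1`, and the symmetric
Lovász Local Lemma applies.

The local lemma is proved by counting models on the variables of the formula. Removing a clause
`c` from a subformula `S` loses at most a fraction `x = 1 / (d + 1)` of its models: the models
of the clauses of `S` sharing no variable with `c` that violate `c` are a `2^(-|c|)` fraction
of all models of those clauses, and by induction these are at most `(1 - x)^(-d)` times as many
as the models of `S \ {c}`.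
-/

open Finset

namespace CNF

variable {V : Type*} [DecidableEq V]

def vars (c : Finset (V × Bool)) : Finset V := c.image Prod.fst

def Satisfies (σ : V → Bool) (c : Finset (V × Bool)) : Prop := ∃ l ∈ c, σ l.1 = l.2

instance (σ : V → Bool) (c : Finset (V × Bool)) : Decidable (Satisfies σ c) :=
  inferInstanceAs (Decidable (∃ l ∈ c, σ l.1 = l.2))

/-- Assignments are encoded as the set of variables of `W` they make true. -/
def models (W : Finset V) (S : Finset (Finset (V × Bool))) : Finset (Finset V) :=
  W.powerset.filter fun T => ∀ c ∈ S, Satisfies (fun v => decide (v ∈ T)) c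

def violating (W : Finset V) (S : Finset (Finset (V × Bool))) (c : Finset (V × Bool)) :
    Finset (Finset V) :=
  (models W S).filter fun T => ¬Satisfies (fun v => decide (v ∈ T)) c

def neighbours (C : Finset (Finset (V × Bool))) (c : Finset (V × Bool)) :
    Finset (Finset (V × Bool)) :=
  (C.erase c).filter fun c' => ¬Disjoint (vars c') (vars c)

lemma card_vars {c : Finset (V × Bool)} (h : ∀ l₁ ∈ c, ∀ l₂ ∈ c, l₁.1 = l₂.1 → l₁ = l₂) :
    #(vars c) = #c :=
  card_image_of_injOn h

lemma satisfies_congr {σ τ : V → Bool} {c : Finset (V × Bool)}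
    (h : ∀ v ∈ vars c, σ v = τ v) : Satisfies σ c ↔ Satisfies τ c := by
  unfold Satisfies
  refine exists_congr fun l => and_congr_right fun hl => ?_
  rw [h l.1 (mem_image_of_mem _ hl)]

lemma eq_on_vars_of_not_satisfies {σ τ : V → Bool} {c : Finset (V × Bool)}
    (hσ : ¬Satisfies σ c) (hτ : ¬Satisfies τ c) : ∀ v ∈ vars c, σ v = τ v := by
  intro v hv
  obtain ⟨⟨_, b⟩, hl, rfl⟩ := mem_image.1 hv
  have h₁ := fun h => hσ ⟨_, hl, h⟩
  have h₂ := fun h => hτ ⟨_, hl, h⟩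
  cases b <;> simp_all

lemma card_models_empty (W : Finset V) : #(models W ∅) = 2 ^ #W := by
  simp [models]

/-- Every clause variable-disjoint from `c` survives overwriting the variables of `c`
arbitrarily, and an assignment violating `c` is recovered from its values off `vars c`. -/
lemma card_violating_mul_le {W : Finset V} {c : Finset (V × Bool)}
    {S : Finset (Finset (V × Bool))} (hcW : vars c ⊆ W)
    (hS : ∀ c' ∈ S, Disjoint (vars c') (vars c)) :
    #(violating W S c) * 2 ^ #(vars c) ≤ #(models W S) := by
  rw [← card_powerset, ← card_product]
  refine card_le_card_of_injOn (fun p => p.1 \ vars c ∪ p.2) ?_ ?_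
  · rintro ⟨T, U⟩ hTU
    simp only [violating, models, coe_product, Set.mem_prod, mem_coe, mem_filter,
      mem_powerset] at hTU ⊢
    obtain ⟨⟨⟨hTW, hT⟩, -⟩, hU⟩ := hTU
    refine ⟨union_subset (sdiff_subset.trans hTW) (hU.trans hcW), fun c' hc' => ?_⟩
    refine (satisfies_congr fun v hv => ?_).1 (hT c' hc')
    have hvc : v ∉ vars c := disjoint_left.1 (hS c' hc') hv
    have hvU : v ∉ U := fun h => hvc (hU h)
    simp [hvc, hvU]
  · rintro ⟨T, U⟩ hTU ⟨T', U'⟩ hTU' heq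
    simp only [violating, models, coe_product, Set.mem_prod, mem_coe, mem_filter,
      mem_powerset] at hTU hTU'
    obtain ⟨⟨-, hT⟩, hU⟩ := hTU
    obtain ⟨⟨-, hT'⟩, hU'⟩ := hTU'
    have hagree := eq_on_vars_of_not_satisfies hT hT'
    have hmem (v : V) : v ∈ T ∧ v ∉ vars c ∨ v ∈ U ↔ v ∈ T' ∧ v ∉ vars c ∨ v ∈ U' := by
      simpa using congrArg (v ∈ ·) heq
    refine Prod.ext (ext fun v => ?_) (ext fun v => ?_)
    · by_cases hv : v ∈ vars c
      · simpa using hagree v hv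
      · have := @hU v; have := @hU' v; have := hmem v; tauto
    · have := @hU v; have := @hU' v; have := hmem v; tauto

lemma models_subset_union_violating (W : Finset V) {c : Finset (V × Bool)}
    {S S' : Finset (Finset (V × Bool))} (hS' : S' ⊆ S) :
    models W S ⊆ models W (insert c S) ∪ violating W S' c := by
  intro T hT
  simp only [violating, models, mem_filter, mem_union, forall_mem_insert] at hT ⊢
  by_cases hc : Satisfies (fun v => decide (v ∈ T)) c
  · exact .inl ⟨hT.1, hc, hT.2⟩
  · exact .inr ⟨⟨hT.1, fun c' hc' => hT.2 c' (hS' hc')⟩, hc⟩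

/-- The local step of the Lovász Local Lemma: conditioned on the clauses of `S` other
than `c`, the clause `c` fails with probability at most `x`. -/
lemma one_sub_mul_card_models_erase_le {W : Finset V} {c : Finset (V × Bool)}
    {S : Finset (Finset (V × Bool))} {x : ℝ} {d : ℕ} (hx : 0 ≤ x) (hcW : vars c ⊆ W) (hcS : c ∈ S)
    (hp : (2 ^ #(vars c) : ℝ)⁻¹ ≤ x * (1 - x) ^ d)
    (hfar : (1 - x) ^ d * #(models W ((S.erase c).filter fun c' => Disjoint (vars c') (vars c)))
      ≤ #(models W (S.erase c))) :
    (1 - x) * #(models W (S.erase c)) ≤ #(models W S) := by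
  set R := (S.erase c).filter fun c' => Disjoint (vars c') (vars c)
  set bad := violating W R c
  have hsplit : (#(models W (S.erase c)) : ℝ) ≤ #(models W S) + #bad := by
    have := card_le_card (models_subset_union_violating W (c := c) (filter_subset _ _ : R ⊆ _))
    rw [insert_erase hcS] at this
    exact_mod_cast this.trans (card_union_le _ _)
  have hbad : (#bad : ℝ) * 2 ^ #(vars c) ≤ #(models W R) := by
    exact_mod_cast card_violating_mul_le hcW fun c' hc' => (mem_filter.1 hc').2
  have hbad' : (#bad : ℝ) ≤ x * #(models W (S.erase c)) :=
    calc (#bad : ℝ) ≤ (2 ^ #(vars c) : ℝ)⁻¹ * #(models W R) := by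
          rw [inv_mul_eq_div, le_div_iff₀ (by positivity)]; exact hbad
      _ ≤ x * (1 - x) ^ d * #(models W R) := by gcongr
      _ ≤ x * #(models W (S.erase c)) := by
          rw [mul_assoc]; gcongr
  linarith

/-- The Lovász Local Lemma in counting form: divided by `2 ^ #W` it reads
`Pr[S] ≥ (1 - x) ^ #(S \ T) Pr[T]` for a uniformly random assignment of `W`. -/
theorem one_sub_pow_mul_card_models_le {W : Finset V} {C : Finset (Finset (V × Bool))}
    {x : ℝ} {d : ℕ} (hx₀ : 0 ≤ x) (hx₁ : x ≤ 1) (hW : ∀ c ∈ C, vars c ⊆ W)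
    (hdeg : ∀ c ∈ C, #(neighbours C c) ≤ d)
    (hp : ∀ c ∈ C, (2 ^ #(vars c) : ℝ)⁻¹ ≤ x * (1 - x) ^ d)
    {S T : Finset (Finset (V × Bool))} (hSC : S ⊆ C) (hTS : T ⊆ S) :
    (1 - x) ^ #(S \ T) * #(models W T) ≤ #(models W S) := by
  induction S using Finset.strongInduction generalizing T with
  | H S ih =>
  obtain hST | ⟨c, hcST⟩ := (S \ T).eq_empty_or_nonempty
  · obtain rfl := subset_antisymm (sdiff_eq_empty_iff_subset.1 hST) hTS
    simp
  obtain ⟨hcS, hcT⟩ := mem_sdiff.1 hcST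
  have hcC := hSC hcS
  have hR : S.erase c ⊂ S := erase_ssubset hcS
  have hRC : S.erase c ⊆ C := (erase_subset c S).trans hSC
  set R := (S.erase c).filter fun c' => Disjoint (vars c') (vars c)
  have hRS : R ⊆ S.erase c := filter_subset _ _
  have hfar : (1 - x) ^ d * #(models W R) ≤ #(models W (S.erase c)) := by
    refine le_trans ?_ (ih _ hR hRC hRS)
    have hnear : #(S.erase c \ R) ≤ d := by
      refine le_trans (card_le_card fun c' hc' => ?_) (hdeg c hcC)
      obtain ⟨hc'R, hc'far⟩ := mem_sdiff.1 hc'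
      exact mem_filter.2 ⟨erase_subset_erase c hSC hc'R, fun h => hc'far (mem_filter.2 ⟨hc'R, h⟩)⟩
    exact mul_le_mul_of_nonneg_right
      (pow_le_pow_of_le_one (by linarith) (by linarith) hnear) (Nat.cast_nonneg _)
  have hstep := one_sub_mul_card_models_erase_le hx₀ (hW c hcC) hcS (hp c hcC) hfar
  have hcard : #(S \ T) = #(S.erase c \ T) + 1 := by
    rw [erase_sdiff_comm, card_erase_add_one hcST]
  calc (1 - x) ^ #(S \ T) * #(models W T)
      = (1 - x) * ((1 - x) ^ #(S.erase c \ T) * #(models W T)) := by rw [hcard]; ring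
    _ ≤ (1 - x) * #(models W (S.erase c)) :=
        mul_le_mul_of_nonneg_left (ih _ hR hRC (subset_erase.2 ⟨hTS, hcT⟩)) (by linarith)
    _ ≤ #(models W S) := hstep

theorem exists_satisfying_of_le_mul_one_sub_pow {C : Finset (Finset (V × Bool))} {x : ℝ} {d : ℕ}
    (hx₀ : 0 ≤ x) (hx₁ : x < 1) (hdeg : ∀ c ∈ C, #(neighbours C c) ≤ d)
    (hp : ∀ c ∈ C, (2 ^ #(vars c) : ℝ)⁻¹ ≤ x * (1 - x) ^ d) :
    ∃ σ : V → Bool, ∀ c ∈ C, Satisfies σ c := by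
  have h := one_sub_pow_mul_card_models_le (W := C.biUnion vars) hx₀ hx₁.le
    (fun c hc => subset_biUnion_of_mem vars hc) hdeg hp subset_rfl (empty_subset C)
  rw [card_models_empty, sdiff_empty] at h
  push_cast at h
  have hpos : 0 < #(models (C.biUnion vars) C) := by
    have : (0 : ℝ) < (1 - x) ^ #C * 2 ^ #(C.biUnion vars) := by
      have : 0 < 1 - x := by linarith
      positivity
    exact_mod_cast this.trans_le h
  obtain ⟨T, hT⟩ := card_pos.1 hpos
  exact ⟨fun v => decide (v ∈ T), (mem_filter.1 hT).2⟩

lemma inv_exp_one_le_one_sub_inv_pow (d : ℕ) : (Real.exp 1)⁻¹ ≤ (1 - ((d : ℝ) + 1)⁻¹) ^ d := by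
  rcases Nat.eq_zero_or_pos d with rfl | hd
  · simpa using inv_le_one_of_one_le₀ (Real.one_le_exp zero_le_one)
  have : 1 - ((d : ℝ) + 1)⁻¹ = (1 + (d : ℝ)⁻¹)⁻¹ := by field_simp; ring
  rw [this, inv_pow]
  exact inv_anti₀ (by positivity) Real.one_add_inv_pow_le_exp

/-- The symmetric Lovász Local Lemma `e p (d + 1) ≤ 1`, where `p = 2 ^ (-#(vars c))` is the
probability that `c` is violated. -/
theorem exists_satisfying_of_exp_mul_le {C : Finset (Finset (V × Bool))} {d : ℕ}
    (hdeg : ∀ c ∈ C, #(neighbours C c) ≤ d)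
    (hp : ∀ c ∈ C, Real.exp 1 * (d + 1) ≤ 2 ^ #(vars c)) :
    ∃ σ : V → Bool, ∀ c ∈ C, Satisfies σ c := by
  obtain rfl | hd := Nat.eq_zero_or_pos d
  · -- `x = (d + 1)⁻¹ = 1` is not admissible, but `x = 1 / 2` is since `p ≤ 1 / e`
    refine exists_satisfying_of_le_mul_one_sub_pow (x := 2⁻¹) (by norm_num) (by norm_num) hdeg
      fun c hc => ?_
    have := Real.exp_one_gt_d9
    have := hp c hc
    rw [inv_le_iff_one_le_mul₀ (by positivity)]
    norm_num at this ⊢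
    linarith
  refine exists_satisfying_of_le_mul_one_sub_pow (x := ((d : ℝ) + 1)⁻¹) (by positivity)
    (inv_lt_one_of_one_lt₀ (by simpa using hd)) hdeg fun c hc => ?_
  calc (2 ^ #(vars c) : ℝ)⁻¹ ≤ (Real.exp 1 * (d + 1))⁻¹ := inv_anti₀ (by positivity) (hp c hc)
    _ = ((d : ℝ) + 1)⁻¹ * (Real.exp 1)⁻¹ := by rw [mul_inv, mul_comm]
    _ ≤ ((d : ℝ) + 1)⁻¹ * (1 - ((d : ℝ) + 1)⁻¹) ^ d := by
        gcongr; exact inv_exp_one_le_one_sub_inv_pow d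

def occurrences (C : Finset (Finset (V × Bool))) (v : V) : Finset (Finset (V × Bool)) :=
  C.filter fun c => ∃ b, (v, b) ∈ c

lemma card_neighbours_add_card_vars_le {C : Finset (Finset (V × Bool))}
    {c : Finset (V × Bool)} (hc : c ∈ C) :
    #(neighbours C c) + #(vars c) ≤ ∑ v ∈ vars c, #(occurrences C v) := by
  have hmem : ∀ v ∈ vars c, c ∈ occurrences C v := fun v hv => by
    obtain ⟨⟨_, b⟩, hl, rfl⟩ := mem_image.1 hv
    exact mem_filter.2 ⟨hc, b, hl⟩
  have hcover : neighbours C c ⊆ (vars c).biUnion fun v => (occurrences C v).erase c := by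
    intro c' hc'
    obtain ⟨hc'C, hc'c⟩ := mem_filter.1 hc'
    obtain ⟨v, hv', hv⟩ := not_disjoint_iff.1 hc'c
    obtain ⟨⟨_, b⟩, hl, rfl⟩ := mem_image.1 hv'
    exact mem_biUnion.2
      ⟨_, hv, mem_erase.2 ⟨ne_of_mem_erase hc'C, mem_filter.2 ⟨mem_of_mem_erase hc'C, b, hl⟩⟩⟩
  calc #(neighbours C c) + #(vars c)
      ≤ ∑ v ∈ vars c, #((occurrences C v).erase c) + ∑ v ∈ vars c, 1 := by
        rw [card_eq_sum_ones (vars c)]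
        gcongr
        exact (card_le_card hcover).trans card_biUnion_le
    _ = ∑ v ∈ vars c, #(occurrences C v) := by
        rw [← sum_add_distrib]
        exact sum_congr rfl fun v hv => card_erase_add_one (hmem v hv)

end CNF

/-- Lovász Local Lemma satisfiability criterion: any `k`-CNF formula (`k ≥ 2`), in which
no variable appears (positively or negatively) in more than `2^{k-2}/k` clauses, is
satisfiable. Clauses are finite sets of literals (variable, sign) over variables `V`,
each clause containing exactly `k` literals on `k` distinct variables. -/
theorem kCNF_low_occurrence_satisfiable
    (V : Type*) [DecidableEq V] (k : ℕ) (hk : 2 ≤ k)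
    (C : Finset (Finset (V × Bool)))
    (hcard : ∀ c ∈ C, c.card = k)
    (hdistinct : ∀ c ∈ C, ∀ l₁ ∈ c, ∀ l₂ ∈ c, l₁.1 = l₂.1 → l₁ = l₂)
    (hocc : ∀ v : V, ((C.filter (fun c => ∃ b, (v, b) ∈ c)).card : ℝ) ≤
      2 ^ (k - 2) / k) :
    ∃ σ : V → Bool, ∀ c ∈ C, ∃ l ∈ c, σ l.1 = l.2 := by
  have hvars (c) (hc : c ∈ C) : #(CNF.vars c) = k :=
    (CNF.card_vars (hdistinct c hc)).trans (hcard c hc)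
  have hd : ((2 ^ (k - 2) - 1 : ℕ) : ℝ) + 1 = 2 ^ (k - 2) := by
    rw [Nat.cast_sub Nat.one_le_two_pow]; push_cast; ring
  refine CNF.exists_satisfying_of_exp_mul_le (d := 2 ^ (k - 2) - 1)
    (fun c hc => ?_) (fun c hc => ?_)
  · have hdeg : (#(CNF.neighbours C c) : ℝ) + 1 ≤ 2 ^ (k - 2) :=
      calc (#(CNF.neighbours C c) : ℝ) + 1 ≤ #(CNF.neighbours C c) + #(CNF.vars c) := by
            rw [hvars c hc]; gcongr; exact_mod_cast (by omega : 1 ≤ k)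
        _ ≤ ∑ v ∈ CNF.vars c, (#(CNF.occurrences C v) : ℝ) := by
            exact_mod_cast CNF.card_neighbours_add_card_vars_le hc
        _ ≤ ∑ v ∈ CNF.vars c, (2 ^ (k - 2) / k : ℝ) := sum_le_sum fun v _ => hocc v
        _ = 2 ^ (k - 2) := by
            rw [sum_const, hvars c hc, nsmul_eq_mul]
            field_simp
    rw [← hd] at hdeg
    exact_mod_cast le_of_add_le_add_right hdeg
  · have h4 : (2 : ℝ) ^ k = 4 * 2 ^ (k - 2) := by
      rw [← pow_sub_mul_pow _ hk]; ring
    rw [hd, hvars c hc, h4]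
    gcongr
    linarith [Real.exp_one_lt_d9]
end

section
/- Let k ≥ 2 be fixed and n sufficiently large, and let q ≥ 2^{3k/2} e^{k/2+1} k · binom(n,k)/n. Then Σ_{t=k}^{n} binom(n,t) · binom(2^k·binom(t,k), 2t/k) · q^{-2t/k} < 1 (with 2t/k interpreted as ⌈2t/k⌉). -/
/-!
Every summand is at most `2⁻ᵗ`, so the sum over `t ≥ k ≥ 2` is at most `2¹⁻ᵏ ≤ 1/2`.
Write `N = 2ᵏ C(t,k)` and `s = ⌈2t/k⌉`. By `C(n,t) ≤ (en/t)ᵗ` and `C(N,s) ≤ (eN/s)ˢ` the summand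
is at most `(en/t)ᵗ xˢ` with `x = eN/(sq)`. Since `N ≤ 2ᵏtᵏ/k!`, `C(n,k) ≥ nᵏ/(2k!)` for
`n ≥ 2k²` and `s ≥ 2t/k`, the lower bound on `q` gives `x ≤ (t/n)ᵏ⁻¹ / √(2e)ᵏ ≤ 1`. Raising
`(en/t)ᵗ xˢ` to the `k`-th power and using `ks ≥ 2t` bounds it by
`((en/t)ᵏ x²)ᵗ ≤ ((t/n)ᵏ⁻² / 2ᵏ)ᵗ ≤ 2⁻ᵏᵗ`.
-/

open Real Finset Nat

lemma choose_le_exp_mul_div_pow (N s : ℕ) : (N.choose s : ℝ) ≤ (exp 1 * N / s) ^ s := by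
  rcases s.eq_zero_or_pos with rfl | hs
  · simp
  have hs' : (0 : ℝ) < s := by exact_mod_cast hs
  calc (N.choose s : ℝ) ≤ N ^ s / s ! := Nat.choose_le_pow_div s N
    _ = (N / s) ^ s * (s ^ s / s !) := by rw [div_pow]; field_simp
    _ ≤ (N / s) ^ s * exp s := by gcongr; exact Real.pow_div_factorial_le_exp _ hs'.le s
    _ = (exp 1 * N / s) ^ s := by rw [← exp_one_pow]; ring

lemma pow_le_two_mul_factorial_mul_choose {n k : ℕ} (hn : 2 * k ^ 2 ≤ n) :
    (n : ℝ) ^ k ≤ 2 * k ! * n.choose k := by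
  rcases k.eq_zero_or_pos with rfl | hk
  · norm_num
  have hkn : k ≤ n := by nlinarith
  have hn0 : (0 : ℝ) < n := by exact_mod_cast hk.trans_le hkn
  have hnR : 2 * (k : ℝ) ^ 2 ≤ n := by exact_mod_cast hn
  have hknR : (k : ℝ) ≤ n := by exact_mod_cast hkn
  have bernoulli : (n : ℝ) ^ k / 2 ≤ ((n : ℝ) - k) ^ k := by
    have hsmall : (k : ℝ) * (k / n) ≤ 1 / 2 := by
      rw [← mul_div_assoc, div_le_div_iff₀ hn0 two_pos]; nlinarith
    calc (n : ℝ) ^ k / 2 ≤ n ^ k * (1 + k * -(k / n)) := by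
          rw [mul_neg]; nlinarith [pow_pos hn0 k]
      _ ≤ n ^ k * (1 + -(k / n)) ^ k := by
          gcongr
          refine one_add_mul_le_pow ?_ k
          have : (k : ℝ) / n ≤ 1 := div_le_one_of_le₀ hknR hn0.le
          linarith
      _ = ((n : ℝ) - k) ^ k := by rw [← mul_pow]; congr 1; field_simp; ring
  have hshift : (n : ℝ) - k ≤ ((n + 1 - k : ℕ) : ℝ) := by
    rw [Nat.cast_sub (by omega)]; push_cast; linarith
  have hpow_le_choose : ((n + 1 - k : ℕ) : ℝ) ^ k ≤ k ! * n.choose k := by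
    rw [← div_le_iff₀' (by positivity)]; exact_mod_cast Nat.pow_le_choose k n
  nlinarith [pow_le_pow_left₀ (sub_nonneg.2 hknR) hshift k]

lemma exp_div_pow_mul_pow_le_half_pow {k s t : ℕ} {r x : ℝ} (hk : 2 ≤ k) (hr0 : 0 < r)
    (hr1 : r ≤ 1) (hx0 : 0 ≤ x) (hx : x ≤ r ^ (k - 1) / √(2 * exp 1) ^ k)
    (hs : 2 * t ≤ k * s) :
    (exp 1 / r) ^ t * x ^ s ≤ (1 / 2) ^ t := by
  obtain ⟨m, rfl⟩ : ∃ m, k = m + 2 := ⟨k - 2, by omega⟩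
  have hx2 : x ^ 2 ≤ r ^ (2 * (m + 1)) / (2 * exp 1) ^ (m + 2) := by
    calc x ^ 2 ≤ (r ^ (m + 1) / √(2 * exp 1) ^ (m + 2)) ^ 2 := by
          gcongr; simpa using hx
      _ = r ^ (2 * (m + 1)) / (2 * exp 1) ^ (m + 2) := by
          rw [div_pow, ← pow_mul, pow_right_comm, sq_sqrt (by positivity), mul_comm]
  have hx1 : x ≤ 1 := by
    have : r ^ (2 * (m + 1)) / (2 * exp 1) ^ (m + 2) ≤ 1 := by
      rw [div_le_one (by positivity)]
      calc r ^ (2 * (m + 1)) ≤ 1 := pow_le_one₀ hr0.le hr1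
        _ ≤ (2 * exp 1) ^ (m + 2) := one_le_pow₀ (by linarith [add_one_le_exp 1])
    nlinarith
  refine le_of_pow_le_pow_left₀ (n := m + 2) (by omega) (by positivity) ?_
  calc ((exp 1 / r) ^ t * x ^ s) ^ (m + 2)
      = (exp 1 / r) ^ ((m + 2) * t) * x ^ ((m + 2) * s) := by ring
    _ ≤ (exp 1 / r) ^ ((m + 2) * t) * x ^ (2 * t) :=
        mul_le_mul_of_nonneg_left (pow_le_pow_of_le_one hx0 hx1 hs) (by positivity)
    _ = ((exp 1 / r) ^ (m + 2) * x ^ 2) ^ t := by ring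
    _ ≤ ((exp 1 / r) ^ (m + 2) * (r ^ (2 * (m + 1)) / (2 * exp 1) ^ (m + 2))) ^ t := by
        gcongr
    _ = (r ^ m / 2 ^ (m + 2)) ^ t := by
        congr 1
        rw [show 2 * (m + 1) = (m + 2) + m by ring, pow_add r (m + 2) m, div_pow, mul_pow]
        field_simp
    _ ≤ (1 / 2 ^ (m + 2)) ^ t := by gcongr; exact pow_le_one₀ hr0.le hr1
    _ = ((1 / 2) ^ t) ^ (m + 2) := by rw [← one_div_pow, ← pow_mul, ← pow_mul, mul_comm]

lemma two_rpow_mul_exp_eq (k : ℕ) :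
    (2 : ℝ) ^ (3 * (k : ℝ) / 2) * exp ((k : ℝ) / 2 + 1) = exp 1 * (2 * √(2 * exp 1)) ^ k := by
  have h2 : (2 : ℝ) ^ (3 * (k : ℝ) / 2) = 2 ^ (k : ℝ) * 2 ^ ((1 / 2 : ℝ) * k) := by
    rw [← rpow_add two_pos]; ring_nf
  rw [h2, mul_pow, sqrt_eq_rpow, ← rpow_natCast (_ ^ (1 / 2 : ℝ)), ← rpow_mul (by positivity),
    mul_rpow zero_le_two (exp_pos 1).le, exp_one_rpow, rpow_natCast, exp_add]
  ring_nf

lemma exp_mul_two_pow_mul_choose_div_le {k n t s : ℕ} {q : ℝ} (ht : 0 < t) (hn : 0 < n)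
    (hs : 2 * t ≤ k * s)
    (hq : exp 1 * (2 * √(2 * exp 1)) ^ k * k * n ^ (k - 1) / (2 * k !) ≤ q) :
    exp 1 * (2 ^ k * t.choose k) / (s * q) ≤ ((t : ℝ) / n) ^ (k - 1) / √(2 * exp 1) ^ k := by
  obtain ⟨m, rfl⟩ : ∃ m, k = m + 1 := Nat.exists_eq_succ_of_ne_zero (by rintro rfl; omega)
  set a := √(2 * exp 1)
  have ha : 0 < a := by positivity
  have hsR : 2 * (t : ℝ) / (m + 1 : ℕ) ≤ s := by
    rw [div_le_iff₀ (by positivity)]; exact_mod_cast (by linarith : 2 * t ≤ s * (m + 1))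
  calc exp 1 * (2 ^ (m + 1) * t.choose (m + 1)) / (s * q)
      ≤ exp 1 * (2 ^ (m + 1) * (t ^ (m + 1) / (m + 1)!)) /
          (2 * t / (m + 1 : ℕ) *
            (exp 1 * (2 * a) ^ (m + 1) * (m + 1 : ℕ) * n ^ m / (2 * (m + 1)!))) := by
        gcongr
        · exact Nat.choose_le_pow_div _ _
        · simpa using hq
    _ = ((t : ℝ) / n) ^ m / a ^ (m + 1) := by
        rw [div_pow]; field_simp; ring

lemma sum_Icc_half_pow_le (k n : ℕ) : ∑ t ∈ Icc k n, (1 / 2 : ℝ) ^ t ≤ 2 * (1 / 2) ^ k := by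
  rw [← Ico_add_one_right_eq_Icc, sum_Ico_eq_sum_range]
  simp_rw [pow_add, ← mul_sum]
  rw [mul_comm]
  exact mul_le_mul_of_nonneg_right (sum_geometric_two_le _) (by positivity)

theorem choose_mul_choose_mul_rpow_le_half_pow {k n t q : ℕ} (hk : 2 ≤ k) (hn : 2 * k ^ 2 ≤ n)
    (hkt : k ≤ t) (htn : t ≤ n)
    (hQ : (2 : ℝ) ^ (3 * (k : ℝ) / 2) * exp ((k : ℝ) / 2 + 1) * k * (n.choose k : ℝ) / n ≤ q) :
    (n.choose t : ℝ) * ((2 ^ k * t.choose k).choose ((2 * t + k - 1) / k) : ℝ) *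
      (q : ℝ) ^ (-(((2 * t + k - 1) / k : ℕ) : ℝ)) ≤ (1 / 2) ^ t := by
  set s := (2 * t + k - 1) / k
  -- `(a + k - 1) / k` is how `ℕ` implements `a ⌈/⌉ k`
  have hs : 2 * t ≤ k * s := le_smul_ceilDiv (by omega : 0 < k)
  have ht : 0 < t := by omega
  have hn0 : 0 < n := by omega
  have hchoose : (n : ℝ) ^ (k - 1) / (2 * k !) ≤ n.choose k / n := by
    rw [div_le_div_iff₀ (by positivity) (by positivity), ← pow_succ,
      Nat.sub_add_cancel (by omega)]
    linarith [pow_le_two_mul_factorial_mul_choose hn]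
  have hq : exp 1 * (2 * √(2 * exp 1)) ^ k * k * n ^ (k - 1) / (2 * k !) ≤ q := by
    rw [← two_rpow_mul_exp_eq]
    refine le_trans ?_ hQ
    simpa only [mul_div_assoc] using mul_le_mul_of_nonneg_left hchoose
      (by positivity : (0 : ℝ) ≤ 2 ^ (3 * (k : ℝ) / 2) * exp ((k : ℝ) / 2 + 1) * k)
  have hx := exp_mul_two_pow_mul_choose_div_le ht hn0 hs hq
  calc (n.choose t : ℝ) * ((2 ^ k * t.choose k).choose s : ℝ) * (q : ℝ) ^ (-(s : ℝ))
      = (n.choose t : ℝ) * (((2 ^ k * t.choose k).choose s : ℝ) / q ^ s) := by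
        rw [rpow_neg (by positivity), rpow_natCast]; ring
    _ ≤ (exp 1 * n / t) ^ t * ((exp 1 * (2 ^ k * t.choose k : ℕ) / s) ^ s / q ^ s) := by
        gcongr <;> exact choose_le_exp_mul_div_pow _ _
    _ = (exp 1 / (t / n)) ^ t * (exp 1 * (2 ^ k * t.choose k) / (s * q)) ^ s := by
        rw [← div_pow]; push_cast; field_simp
    _ ≤ (1 / 2) ^ t :=
        exp_div_pow_mul_pow_le_half_pow hk (by positivity)
          (div_le_one_of_le₀ (by exact_mod_cast htn) (by positivity)) (by positivity) hx hs

/-- Potential estimate for Client's strategy in the Waiter–Client `k`-SAT game: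
for fixed `k ≥ 2`, `n` sufficiently large and `q ≥ 2^{3k/2} e^{k/2+1} k C(n,k)/n`,
`∑_{t=k}^{n} C(n,t) · C(2^k C(t,k), ⌈2t/k⌉) · q^{-⌈2t/k⌉} < 1`. -/
theorem waiterClient_kSAT_client_potential (k : ℕ) (hk : 2 ≤ k) :
    ∃ n₀ : ℕ, ∀ n : ℕ, n₀ ≤ n → ∀ q : ℕ, 0 < q →
      (2 : ℝ) ^ (3 * (k : ℝ) / 2) * Real.exp ((k : ℝ) / 2 + 1) * k *
          (n.choose k : ℝ) / n ≤ (q : ℝ) →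
      ∑ t ∈ Finset.Icc k n,
        (n.choose t : ℝ) * (((2 ^ k * t.choose k).choose ((2 * t + k - 1) / k)) : ℝ) *
          (q : ℝ) ^ (-(((2 * t + k - 1) / k : ℕ) : ℝ)) < 1 := by
  refine ⟨2 * k ^ 2, fun n hn q _ hQ => ?_⟩
  calc _ ≤ ∑ t ∈ Icc k n, (1 / 2 : ℝ) ^ t := sum_le_sum fun t ht =>
        choose_mul_choose_mul_rpow_le_half_pow hk hn (mem_Icc.1 ht).1 (mem_Icc.1 ht).2 hQ
    _ ≤ 2 * (1 / 2) ^ k := sum_Icc_half_pow_le k n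
    _ ≤ 2 * (1 / 2) ^ 2 :=
        mul_le_mul_of_nonneg_left (pow_le_pow_of_le_one (by norm_num) (by norm_num) hk) zero_le_two
    _ < 1 := by norm_num
end

section
/- Let C be a set of k-clauses over variables x_1,…,x_n (k ≥ 2) such that for every nonempty set D of variables, the number of clauses of C using only variables from D is at most 2|D|/k. Then ⋀C is satisfiable. -/
/-! Under the sparsity bound every set `s` of clauses mentions at least `k|s|/2 ≥ |s|`
variables, so by Hall's theorem each clause can be given a variable of its own. Setting
that variable to satisfy its literal in the clause satisfies all clauses at once. -/

open Finset

theorem exists_satisfying_of_hall {ι V : Type*} [DecidableEq V] (c : ι → Finset (V × Bool))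
    (hall : ∀ s : Finset ι, #s ≤ #(s.biUnion fun i => (c i).image Prod.fst)) :
    ∃ σ : V → Bool, ∀ i, ∃ l ∈ c i, σ l.1 = l.2 := by
  obtain ⟨f, hf_inj, hf_mem⟩ := (all_card_le_biUnion_card_iff_exists_injective _).1 hall
  have hsign : ∀ i, ∃ b, (f i, b) ∈ c i := fun i => by
    obtain ⟨⟨v, b⟩, hl, rfl⟩ := mem_image.1 (hf_mem i)
    exact ⟨b, hl⟩
  choose b hb using hsign
  exact ⟨Function.extend f b fun _ => false, fun i => ⟨(f i, b i), hb i, hf_inj.extend_apply ..⟩⟩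

theorem card_le_card_vars_of_sparse {V : Type*} [DecidableEq V] {k : ℕ} (hk : 2 ≤ k)
    {C : Finset (Finset (V × Bool))} (hne : ∀ c ∈ C, c.Nonempty)
    (hsparse : ∀ D : Finset V, D.Nonempty →
      #(C.filter fun c => ∀ l ∈ c, l.1 ∈ D) * k ≤ 2 * #D)
    (s : Finset C) : #s ≤ #(s.biUnion fun c => c.1.image Prod.fst) := by
  rcases s.eq_empty_or_nonempty with rfl | ⟨c, hc⟩
  · simp
  set D := s.biUnion fun c => c.1.image Prod.fst
  have hvars : ∀ c ∈ s, ∀ l ∈ c.1, l.1 ∈ D := fun c hc l hl =>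
    mem_biUnion.2 ⟨c, hc, mem_image_of_mem _ hl⟩
  have hD : D.Nonempty := by
    obtain ⟨l, hl⟩ := hne c c.2
    exact ⟨l.1, hvars c hc l hl⟩
  have hsub : s.map (Function.Embedding.subtype _) ⊆ C.filter fun c => ∀ l ∈ c, l.1 ∈ D := by
    intro _ h
    obtain ⟨c, hc, rfl⟩ := mem_map.1 h
    exact mem_filter.2 ⟨c.2, hvars c hc⟩
  have hs : #s * k ≤ 2 * #D := by
    calc #s * k = #(s.map (Function.Embedding.subtype _)) * k := by rw [card_map]
      _ ≤ _ := Nat.mul_le_mul_right k (card_le_card hsub)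
      _ ≤ 2 * #D := hsparse D hD
  nlinarith

theorem sparse_clauses_satisfiable_general
    (V : Type*) [DecidableEq V] (k : ℕ) (hk : 2 ≤ k)
    (C : Finset (Finset (V × Bool)))
    (hcard : ∀ c ∈ C, c.card = k)
    (hsparse : ∀ D : Finset V, D.Nonempty →
      (C.filter (fun c => ∀ l ∈ c, l.1 ∈ D)).card * k ≤ 2 * D.card) :
    ∃ σ : V → Bool, ∀ c ∈ C, ∃ l ∈ c, σ l.1 = l.2 := by
  have hne : ∀ c ∈ C, c.Nonempty := fun c hc => card_pos.1 (by rw [hcard c hc]; omega)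
  obtain ⟨σ, hσ⟩ := exists_satisfying_of_hall (fun c : C => c.1)
    (card_le_card_vars_of_sparse hk hne hsparse)
  exact ⟨σ, fun c hc => hσ ⟨c, hc⟩⟩

/-- If a set `C` of `k`-clauses (`k ≥ 2`) over finitely many variables is such that every
nonempty set `D` of variables supports at most `2|D|/k` clauses of `C`, then the
conjunction of the clauses in `C` is satisfiable. -/
theorem sparse_clauses_satisfiable
    (V : Type*) [DecidableEq V] (k : ℕ) (hk : 2 ≤ k)
    (C : Finset (Finset (V × Bool)))
    (hcard : ∀ c ∈ C, c.card = k)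
    (hdistinct : ∀ c ∈ C, ∀ l₁ ∈ c, ∀ l₂ ∈ c, l₁.1 = l₂.1 → l₁ = l₂)
    (hsparse : ∀ D : Finset V, D.Nonempty →
      (C.filter (fun c => ∀ l ∈ c, l.1 ∈ D)).card * k ≤ 2 * D.card) :
    ∃ σ : V → Bool, ∀ c ∈ C, ∃ l ∈ c, σ l.1 = l.2 :=
  sparse_clauses_satisfiable_general V k hk C hcard hsparse
end
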